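/- arXiv:2103.05381 — 2 statements merged into one kernel-verified Lean document; each statement's English description precedes it below -/
import Mathlib

section
/- Let M be an N×N Hermitian complex matrix and let G be a k×N complex matrix with G G† = I_k (orthonormal rows). Then tr(G M G†) ≥ the sum of the k smallest eigenvalues of M (eigenvalues counted with multiplicity and listed in increasing order). -/
open scoped Matrix Kronecker BigOperators ComplexOrder
open Matrix

/-- The positive-semidefinite square root of a PSD matrix (0 if not PSD). -/
noncomputable def psdSqrt {N : Type*} [Fintype N] [DecidableEq N] (A : Matrix N N ℂ) :
    Matrix N N ℂ :=
  open scoped Classical in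
  if h : A.PosSemidef then
    h.1.eigenvectorUnitary.1 * diagonal ((↑) ∘ (√·) ∘ h.1.eigenvalues) *
      (star h.1.eigenvectorUnitary : Matrix N N ℂ)
  else 0

/-- Squared Frobenius (Hilbert–Schmidt) norm: `‖X‖² = tr (Xᴴ X)`. -/
noncomputable def hsNormSq {N : Type*} [Fintype N] (X : Matrix N N ℂ) : ℝ :=
  (Matrix.trace (Xᴴ * X)).re

/-- A density matrix: positive semidefinite with unit trace. -/
def IsDensity {N : Type*} [Fintype N] [DecidableEq N] (ρ : Matrix N N ℂ) : Prop :=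
  ρ.PosSemidef ∧ ρ.trace = 1

/-- Standard inner product on `ℂ^N`. -/
noncomputable def cInner {N : Type*} [Fintype N] (x y : N → ℂ) : ℂ :=
  ∑ i, star (x i) * y i

/-- Outer product `ψ ψ†`. -/
noncomputable def outer {N : Type*} (ψ : N → ℂ) : Matrix N N ℂ :=
  Matrix.vecMulVec ψ (star ψ)

/-- The family of unit vectors of a rank-one von Neumann measurement: an orthonormal basis,
indexed by the dimension. -/
def IsVNM {N : Type*} [Fintype N] [DecidableEq N] (u : N → N → ℂ) : Prop :=
  ∀ a b, cInner (u a) (u b) = if a = b then (1 : ℂ) else 0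

/-- The rank-one projection `Π_h = u_h u_h†` of a measurement. -/
noncomputable def projOf {N : Type*} (u : N → N → ℂ) (h : N) : Matrix N N ℂ :=
  outer (u h)

/-- The measurement `{u_h u_h†}` fixes `σ`: `Σ_h Π_h σ Π_h = σ`. -/
def FixesVNM {N : Type*} [Fintype N] (u : N → N → ℂ) (σ : Matrix N N ℂ) : Prop :=
  ∑ h, projOf u h * σ * projOf u h = σ

/-- Reduced state of the second factor: `(ρ_B)_{j j'} = Σ_i ρ_{(i,j),(i,j')}`. -/
noncomputable def redB {m n : ℕ} (ρ : Matrix (Fin m × Fin n) (Fin m × Fin n) ℂ) :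
    Matrix (Fin n) (Fin n) ℂ :=
  Matrix.of fun j j' => ∑ i, ρ (i, j) (i, j')

/-- Reduced state of the first factor: `(ρ_C)_{k k'} = Σ_l ρ_{(k,l),(k',l)}`. -/
noncomputable def redC {u v : ℕ} (ρ : Matrix (Fin u × Fin v) (Fin u × Fin v) ℂ) :
    Matrix (Fin u) (Fin u) ℂ :=
  Matrix.of fun k k' => ∑ l, ρ (k, l) (k', l)

/-- `I_m ⊗ P ⊗ I_v` acting on the middle two factors. -/
noncomputable def ampMid (m v : ℕ) {n u : ℕ} (P : Matrix (Fin n × Fin u) (Fin n × Fin u) ℂ) :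
    Matrix ((Fin m × Fin n) × Fin u × Fin v) ((Fin m × Fin n) × Fin u × Fin v) ℂ :=
  Matrix.of fun p q =>
    (if p.1.1 = q.1.1 then (1 : ℂ) else 0) * P (p.1.2, p.2.1) (q.1.2, q.2.1) *
      (if p.2.2 = q.2.2 then (1 : ℂ) else 0)

/-- The map `Π^{BC}(X) = Σ_h (I_m ⊗ Π_h ⊗ I_v) X (I_m ⊗ Π_h ⊗ I_v)`. -/
noncomputable def pinchBC {m n u v : ℕ} (w : (Fin n × Fin u) → (Fin n × Fin u) → ℂ)
    (X : Matrix ((Fin m × Fin n) × Fin u × Fin v) ((Fin m × Fin n) × Fin u × Fin v) ℂ) :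
    Matrix ((Fin m × Fin n) × Fin u × Fin v) ((Fin m × Fin n) × Fin u × Fin v) ℂ :=
  ∑ h, ampMid m v (projOf w h) * X * ampMid m v (projOf w h)

/-- The measurement-induced nonbilocality `N_H^b(ρ_AB ⊗ ρ_CD)`. -/
noncomputable def NHb {m n u v : ℕ}
    (ρAB : Matrix (Fin m × Fin n) (Fin m × Fin n) ℂ)
    (ρCD : Matrix (Fin u × Fin v) (Fin u × Fin v) ℂ) : ℝ :=
  sSup { r : ℝ | ∃ w : (Fin n × Fin u) → (Fin n × Fin u) → ℂ,
    IsVNM w ∧ FixesVNM w (redB ρAB ⊗ₖ redC ρCD) ∧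
    r = hsNormSq (psdSqrt (ρAB ⊗ₖ ρCD) - pinchBC w (psdSqrt (ρAB ⊗ₖ ρCD))) }

/-! Diagonalise `M = U D Uᴴ` and put `B = G U`. Then `B Bᴴ = 1`, so `P = Bᴴ B` is an
orthogonal projection of trace `k`, and `tr (G M Gᴴ) = ∑ λ_s P_ss` with weights
`0 ≤ P_ss ≤ 1` summing to `k`. Among all such weightings of the sorted eigenvalues, weight one
on the `k` smallest is optimal: for a threshold `t` between the `k`-th and the `(k+1)`-th
eigenvalue, every term of `∑ (λ_s - t) (P_ss - 𝟙[s < k])` is nonnegative. -/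

section Bathtub

open Finset

theorem Finset.sum_le_sum_mul_of_threshold {ι : Type*} [Fintype ι] [DecidableEq ι]
    (S : Finset ι) {e c : ι → ℝ} {t : ℝ} (he_le : ∀ s ∈ S, e s ≤ t) (he_ge : ∀ s ∉ S, t ≤ e s)
    (hc0 : ∀ s, 0 ≤ c s) (hc1 : ∀ s, c s ≤ 1) (hsum : ∑ s, c s = #S) :
    ∑ s ∈ S, e s ≤ ∑ s, e s * c s := by
  set χ : ι → ℝ := fun s => if s ∈ S then 1 else 0
  have hterm : ∀ s, t * (c s - χ s) ≤ e s * (c s - χ s) := fun s => by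
    by_cases hs : s ∈ S
    · simpa [χ, hs] using mul_le_mul_of_nonpos_right (he_le s hs) (by linarith [hc1 s])
    · simpa [χ, hs] using mul_le_mul_of_nonneg_right (he_ge s hs) (hc0 s)
  have hχ : ∑ s, χ s = #S := by simp [χ]
  have heχ : ∑ s, e s * χ s = ∑ s ∈ S, e s := by simp [χ]
  have := Finset.sum_le_sum fun s (_ : s ∈ univ) => hterm s
  simp only [mul_sub, Finset.sum_sub_distrib, ← Finset.mul_sum, hsum, hχ, heχ,
    sub_self] at this
  linarith

theorem sum_val_lt_le_sum_mul_of_monotone {N k : ℕ} {e c : Fin N → ℝ} (he : Monotone e)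
    (hc0 : ∀ s, 0 ≤ c s) (hc1 : ∀ s, c s ≤ 1) (hsum : ∑ s, c s = k) :
    (∑ s : Fin N, if (s : ℕ) < k then e s else 0) ≤ ∑ s, e s * c s := by
  have hkN : k ≤ N := by
    have : (k : ℝ) ≤ N := hsum ▸ (Finset.sum_le_sum fun s _ => hc1 s).trans (by simp)
    exact_mod_cast this
  obtain ⟨t, he_le, he_ge⟩ : ∃ t, (∀ s : Fin N, (s : ℕ) < k → e s ≤ t) ∧
      ∀ s : Fin N, ¬ (s : ℕ) < k → t ≤ e s := by
    rcases hkN.lt_or_eq with hk | rfl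
    · exact ⟨e ⟨k, hk⟩, fun s hs => he (Fin.le_def.2 hs.le),
        fun s hs => he (Fin.le_def.2 (not_lt.1 hs))⟩
    · obtain ⟨t, ht⟩ := (Set.finite_range e).bddAbove
      exact ⟨t, fun s _ => ht ⟨s, rfl⟩, fun s hs => absurd s.isLt hs⟩
  rw [← Finset.sum_filter]
  exact Finset.sum_le_sum_mul_of_threshold _ (by simpa using he_le) (by simpa using he_ge)
    hc0 hc1 (by simpa [Fin.card_filter_val_lt, hkN] using hsum)

end Bathtub

namespace Matrix

variable {𝕜 : Type*} [RCLike 𝕜] {m n : Type*} [Fintype m] [Fintype n]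

theorem posSemidef_one_sub_conjTranspose_mul_self [DecidableEq m] [DecidableEq n]
    {B : Matrix m n 𝕜} (hB : B * Bᴴ = 1) : (1 - Bᴴ * B).PosSemidef := by
  have hP : (Bᴴ * B) * (Bᴴ * B) = Bᴴ * B := by
    rw [Matrix.mul_assoc, ← Matrix.mul_assoc B, hB, Matrix.one_mul]
  have hQ : (1 - Bᴴ * B)ᴴ * (1 - Bᴴ * B) = 1 - Bᴴ * B := by
    simp only [conjTranspose_sub, conjTranspose_one, conjTranspose_mul,
      conjTranspose_conjTranspose, sub_mul, mul_sub, Matrix.one_mul, Matrix.mul_one, hP]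
    abel
  exact hQ ▸ posSemidef_conjTranspose_mul_self _

theorem re_diag_conjTranspose_mul_self_mem_Icc [DecidableEq m] [DecidableEq n]
    {B : Matrix m n 𝕜} (hB : B * Bᴴ = 1) (s : n) : RCLike.re ((Bᴴ * B) s s) ∈ Set.Icc 0 1 := by
  have h0 := RCLike.nonneg_iff.1 ((posSemidef_conjTranspose_mul_self B).diag_nonneg (i := s))
  have h1 := RCLike.nonneg_iff.1
    ((posSemidef_one_sub_conjTranspose_mul_self hB).diag_nonneg (i := s))
  simp only [sub_apply, one_apply_eq, map_sub, RCLike.one_re] at h1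
  exact ⟨h0.1, by linarith [h1.1]⟩

theorem sum_re_diag_conjTranspose_mul_self [DecidableEq m] {B : Matrix m n 𝕜}
    (hB : B * Bᴴ = 1) : ∑ s, RCLike.re ((Bᴴ * B) s s) = Fintype.card m := by
  have := congrArg RCLike.re (trace_mul_comm Bᴴ B)
  simpa [trace, hB] using this

theorem IsHermitian.re_trace_mul_mul_conjTranspose [DecidableEq n] {M : Matrix n n 𝕜}
    (hM : M.IsHermitian) (G : Matrix m n 𝕜) :
    RCLike.re (G * M * Gᴴ).trace = ∑ s, hM.eigenvalues s *
      RCLike.re (((G * (hM.eigenvectorUnitary : Matrix n n 𝕜))ᴴ *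
        (G * (hM.eigenvectorUnitary : Matrix n n 𝕜))) s s) := by
  set B : Matrix m n 𝕜 := G * (hM.eigenvectorUnitary : Matrix n n 𝕜)
  have hGM : G * M * Gᴴ =
      B * ((diagonal (RCLike.ofReal ∘ hM.eigenvalues) : Matrix n n 𝕜) * Bᴴ) := by
    conv_lhs => rw [hM.spectral_theorem, Unitary.conjStarAlgAut_apply]
    simp only [B, conjTranspose_mul, Matrix.mul_assoc, star_eq_conjTranspose]
  rw [hGM, trace_mul_comm, Matrix.mul_assoc, trace]
  simp [diagonal_mul]

end Matrix

/-- If G has orthonormal rows (`G G† = I_k`) and M is Hermitian, then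
`tr(G M G†)` is at least the sum of the k smallest eigenvalues of M. -/
theorem stmt12 {N k : ℕ} (M : Matrix (Fin N) (Fin N) ℂ) (hM : M.IsHermitian)
    (G : Matrix (Fin k) (Fin N) ℂ) (hG : G * Gᴴ = 1)
    (e : Fin N → ℝ) (hmono : Monotone e)
    (hperm : ∃ g : Equiv.Perm (Fin N), ∀ s, e s = hM.eigenvalues (g s)) :
    (∑ s : Fin N, if (s : ℕ) < k then e s else 0) ≤ (Matrix.trace (G * M * Gᴴ)).re := by
  obtain ⟨g, hg⟩ := hperm
  set U : Matrix (Fin N) (Fin N) ℂ := (hM.eigenvectorUnitary : Matrix (Fin N) (Fin N) ℂ)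
  have hB : (G * U) * (G * U)ᴴ = 1 := by
    rw [conjTranspose_mul, Matrix.mul_assoc, ← Matrix.mul_assoc U, ← star_eq_conjTranspose,
      Unitary.mul_star_self_of_mem hM.eigenvectorUnitary.2, Matrix.one_mul, hG]
  set c : Fin N → ℝ := fun s => (((G * U)ᴴ * (G * U)) s s).re
  have hc : ∀ s, c s ∈ Set.Icc 0 1 := re_diag_conjTranspose_mul_self_mem_Icc hB
  have hcsum : ∑ s, c (g s) = k := by
    rw [Equiv.sum_comp g c, ← Fintype.card_fin k]
    exact sum_re_diag_conjTranspose_mul_self hB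
  calc (∑ s : Fin N, if (s : ℕ) < k then e s else 0)
      ≤ ∑ s, e s * c (g s) :=
        sum_val_lt_le_sum_mul_of_monotone hmono (fun s => (hc (g s)).1) (fun s => (hc (g s)).2)
          hcsum
    _ = ∑ s, hM.eigenvalues s * c s := by
        simp only [hg]; exact Equiv.sum_comp g fun s => hM.eigenvalues s * c s
    _ = (G * M * Gᴴ).trace.re := (hM.re_trace_mul_mul_conjTranspose G).symm
end

section
/- Let ρ_AB, ρ_CD be density matrices on ℂ^m⊗ℂ^n and ℂ^u⊗ℂ^v, with reduced states ρ_B, ρ_C having eigenvalues (λ_e)_{e∈Fin n} and (μ_f)_{f∈Fin u} (with multiplicity). Assume the products determine the first index: λ_e μ_f = λ_{e'} μ_{f'} implies e = e'. Let (β_e) be an orthonormal eigenbasis of ρ_B and let Π^B(√ρ_AB) = Σ_e (I_m⊗β_eβ_e†)√ρ_AB(I_m⊗β_eβ_e†). Then N_H^b(ρ_AB⊗ρ_CD) = 1 − tr(√ρ_AB · Π^B(√ρ_AB)) · inf{ tr(√ρ_CD · Π^C(√ρ_CD)) : {Q_f} a rank-one von Neumann measurement on ℂ^u fixing ρ_C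 }, where Π^C(√ρ_CD) = Σ_f (Q_f⊗I_v)√ρ_CD(Q_f⊗I_v). -/
open scoped Matrix Kronecker BigOperators ComplexOrder
open Matrix

/-- The map `X ↦ Σ_e (I_m ⊗ β_e β_e†) X (I_m ⊗ β_e β_e†)` on the B factor. -/
noncomputable def pinchB {m n : ℕ} (β : Fin n → Fin n → ℂ)
    (X : Matrix (Fin m × Fin n) (Fin m × Fin n) ℂ) :
    Matrix (Fin m × Fin n) (Fin m × Fin n) ℂ :=
  ∑ e, ((1 : Matrix (Fin m) (Fin m) ℂ) ⊗ₖ projOf β e) * X *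
    ((1 : Matrix (Fin m) (Fin m) ℂ) ⊗ₖ projOf β e)

/-- The map `X ↦ Σ_f (Q_f ⊗ I_v) X (Q_f ⊗ I_v)` on the C factor. -/
noncomputable def pinchC {u v : ℕ} (γ : Fin u → Fin u → ℂ)
    (X : Matrix (Fin u × Fin v) (Fin u × Fin v) ℂ) :
    Matrix (Fin u × Fin v) (Fin u × Fin v) ℂ :=
  ∑ f, (projOf γ f ⊗ₖ (1 : Matrix (Fin v) (Fin v) ℂ)) * X *
    (projOf γ f ⊗ₖ (1 : Matrix (Fin v) (Fin v) ℂ))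


set_option linter.unusedSectionVars false
set_option linter.unusedTactic false
section Basics
variable {N : Type*} [Fintype N] [DecidableEq N]

lemma outer_apply {ψ : N → ℂ} (i j : N) : outer ψ i j = ψ i * star (ψ j) := rfl

lemma outer_conjTranspose (ψ : N → ℂ) : (outer ψ)ᴴ = outer ψ := by
  ext i j
  simp [outer, Matrix.vecMulVec_apply, Matrix.conjTranspose_apply, mul_comm]

lemma outer_mul_outer (x y : N → ℂ) :
    outer x * outer y = cInner x y • Matrix.vecMulVec x (star y) := by
  ext i j
  simp only [Matrix.mul_apply, outer, Matrix.vecMulVec_apply, Matrix.smul_apply, cInner,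
    Finset.sum_mul, smul_eq_mul, Pi.star_apply]
  exact Finset.sum_congr rfl fun k _ => by ring

lemma outer_mul_self (x : N → ℂ) (hx : cInner x x = 1) :
    outer x * outer x = outer x := by
  rw [outer_mul_outer, hx, one_smul]; rfl

lemma outer_mul_orth (x y : N → ℂ) (hxy : cInner x y = 0) :
    outer x * outer y = 0 := by
  rw [outer_mul_outer, hxy, zero_smul]

/-- completeness of an orthonormal basis -/
lemma IsVNM.sum_proj {w : N → N → ℂ} (hw : IsVNM w) :
    ∑ h, projOf w h = 1 := by
  classical
  let U : Matrix N N ℂ := Matrix.of fun j h => w h j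
  have hU : Uᴴ * U = 1 := by
    ext a b
    simpa [U, Matrix.mul_apply, Matrix.conjTranspose_apply, Matrix.one_apply, cInner]
      using hw a b
  have hU2 : U * Uᴴ = 1 := mul_eq_one_comm.mp hU
  ext j j'
  calc (∑ h, projOf w h) j j' = ∑ h, w h j * star (w h j') := by
        simp [projOf, outer, Matrix.vecMulVec_apply]
        simp only [Matrix.sum_apply, projOf, outer, Matrix.vecMulVec_apply]; rfl
    _ = (U * Uᴴ) j j' := by simp [U, Matrix.mul_apply, Matrix.conjTranspose_apply]
    _ = (1 : Matrix N N ℂ) j j' := by rw [hU2]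

lemma mul_outer_eq (M : Matrix N N ℂ) (x : N → ℂ) :
    M * outer x = Matrix.vecMulVec (M *ᵥ x) (star x) := by
  ext i j
  simp only [Matrix.mul_apply, outer, Matrix.vecMulVec_apply, Matrix.mulVec, dotProduct,
    Finset.sum_mul, Pi.star_apply]
  exact Finset.sum_congr rfl fun k _ => by ring

lemma trace_mul_outer (M : Matrix N N ℂ) (x : N → ℂ) :
    Matrix.trace (M * outer x) = cInner x (M *ᵥ x) := by
  rw [mul_outer_eq]
  simp [Matrix.trace, Matrix.diag, Matrix.vecMulVec_apply, cInner, mul_comm]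

/-- trace of Aᴴ * A is a nonneg real -/
lemma trace_conjTranspose_mul_self_re_nonneg (A : Matrix N N ℂ) :
    0 ≤ (Matrix.trace (Aᴴ * A)).re := by
  have : Matrix.trace (Aᴴ * A) = ∑ i, ∑ j, (Complex.normSq (A j i) : ℂ) := by
    simp [Matrix.trace, Matrix.diag, Matrix.mul_apply, Matrix.conjTranspose_apply,
      Complex.normSq_eq_conj_mul_self]
  rw [this]
  simp only [Complex.re_sum]
  refine Finset.sum_nonneg fun i _ => Finset.sum_nonneg fun j _ => ?_
  simpa using Complex.normSq_nonneg (A j i)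

lemma trace_conjTranspose_mul_self_im (A : Matrix N N ℂ) :
    (Matrix.trace (Aᴴ * A)).im = 0 := by
  have : Matrix.trace (Aᴴ * A) = ∑ i, ∑ j, (Complex.normSq (A j i) : ℂ) := by
    simp [Matrix.trace, Matrix.diag, Matrix.mul_apply, Matrix.conjTranspose_apply,
      Complex.normSq_eq_conj_mul_self]
  rw [this]
  simp [Complex.im_sum]

lemma trace_conjTranspose_mul_self_eq_zero {A : Matrix N N ℂ}
    (h : Matrix.trace (Aᴴ * A) = 0) : A = 0 := by
  have h2 : ∑ i, ∑ j, Complex.normSq (A j i) = 0 := by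
    have : Matrix.trace (Aᴴ * A) = ∑ i, ∑ j, (Complex.normSq (A j i) : ℂ) := by
      simp [Matrix.trace, Matrix.diag, Matrix.mul_apply, Matrix.conjTranspose_apply,
        Complex.normSq_eq_conj_mul_self]
    rw [this] at h
    exact_mod_cast h
  ext i j
  have := (Finset.sum_eq_zero_iff_of_nonneg (fun i _ => Finset.sum_nonneg
    (fun j _ => Complex.normSq_nonneg _))).mp h2 j (Finset.mem_univ _)
  have := (Finset.sum_eq_zero_iff_of_nonneg (fun j _ => Complex.normSq_nonneg _)).mp this i
    (Finset.mem_univ _)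
  simpa using Complex.normSq_eq_zero.mp this

end Basics

section Kron
variable {A B : Type*} [Fintype A] [Fintype B] [DecidableEq A] [DecidableEq B]

lemma kron_conjTranspose (M : Matrix A A ℂ) (N : Matrix B B ℂ) :
    (M ⊗ₖ N)ᴴ = Mᴴ ⊗ₖ Nᴴ := by
  ext p q
  simp [Matrix.conjTranspose_apply, Matrix.kroneckerMap_apply, _root_.map_mul]

lemma kron_posSemidef {M : Matrix A A ℂ} {N : Matrix B B ℂ}
    (hM : M.PosSemidef) (hN : N.PosSemidef) : (M ⊗ₖ N).PosSemidef := by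
  exact hM.kronecker hN

/-- tensor product of vectors -/
noncomputable def tens (x : A → ℂ) (y : B → ℂ) : A × B → ℂ := fun p => x p.1 * y p.2

lemma cInner_tens (x x' : A → ℂ) (y y' : B → ℂ) :
    cInner (tens x y) (tens x' y') = cInner x x' * cInner y y' := by
  simp only [cInner, tens, Finset.sum_mul_sum, ← Finset.univ_product_univ, Finset.sum_product]
  exact Finset.sum_congr rfl fun a _ => Finset.sum_congr rfl fun b _ => by
    simp [mul_comm, mul_left_comm, mul_assoc]

lemma outer_tens (x : A → ℂ) (y : B → ℂ) :
    outer (tens x y) = outer x ⊗ₖ outer y := by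
  ext p q
  simp only [outer, Matrix.vecMulVec_apply, Matrix.kroneckerMap_apply, tens, Pi.star_apply]
  rw [star_mul']
  ring

lemma kron_mulVec (M : Matrix A A ℂ) (N : Matrix B B ℂ) (z : A × B → ℂ) (p : A × B) :
    ((M ⊗ₖ N) *ᵥ z) p = ∑ a, ∑ b, M p.1 a * N p.2 b * z (a, b) := by
  simp only [Matrix.mulVec, dotProduct, ← Finset.univ_product_univ, Finset.sum_product,
    Matrix.kroneckerMap_apply]

lemma kron_mulVec_tens (M : Matrix A A ℂ) (N : Matrix B B ℂ) (x : A → ℂ) (y : B → ℂ) :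
    (M ⊗ₖ N) *ᵥ tens x y = tens (M *ᵥ x) (N *ᵥ y) := by
  ext p
  rw [kron_mulVec]
  simp only [tens, Matrix.mulVec, dotProduct, Finset.sum_mul_sum]
  exact Finset.sum_congr rfl fun a _ => Finset.sum_congr rfl fun b _ => by ring

lemma sum_kron {ι : Type*} (s : Finset ι) (f : ι → Matrix A A ℂ) (N : Matrix B B ℂ) :
    (∑ i ∈ s, f i) ⊗ₖ N = ∑ i ∈ s, f i ⊗ₖ N := by
  ext p q
  simp [Matrix.kroneckerMap_apply, Matrix.sum_apply, Finset.sum_mul]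

lemma kron_sum {ι : Type*} (s : Finset ι) (M : Matrix A A ℂ) (f : ι → Matrix B B ℂ) :
    M ⊗ₖ (∑ i ∈ s, f i) = ∑ i ∈ s, M ⊗ₖ f i := by
  ext p q
  simp [Matrix.kroneckerMap_apply, Matrix.sum_apply, Finset.mul_sum]

end Kron

open scoped MatrixOrder in
lemma psdSqrt_eq_cfcSqrt {N : Type*} [Fintype N] [DecidableEq N] {A : Matrix N N ℂ}
    (hA : A.PosSemidef) : psdSqrt A = CFC.sqrt A := by
  rw [psdSqrt, dif_pos hA, CFC.sqrt_eq_cfc, cfc_nnreal_eq_real _ A, hA.1.cfc_eq]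
  simp only [IsHermitian.cfc, Unitary.conjStarAlgAut_apply, Real.coe_sqrt, Real.coe_toNNReal']
  congr 3
  funext i
  simp [max_eq_left (hA.eigenvalues_nonneg i)]

open scoped MatrixOrder in
lemma psdSqrt_posSemidef {N : Type*} [Fintype N] [DecidableEq N] {A : Matrix N N ℂ}
    (hA : A.PosSemidef) : (psdSqrt A).PosSemidef := by
  rw [psdSqrt_eq_cfcSqrt hA]; exact (CFC.sqrt_nonneg A).posSemidef

open scoped MatrixOrder in
lemma psdSqrt_mul_self {N : Type*} [Fintype N] [DecidableEq N] {A : Matrix N N ℂ}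
    (hA : A.PosSemidef) : psdSqrt A * psdSqrt A = A := by
  rw [psdSqrt_eq_cfcSqrt hA]; exact CFC.sqrt_mul_sqrt_self A hA.nonneg

open scoped MatrixOrder in
lemma psdSqrt_kron {A B : Type*} [Fintype A] [Fintype B] [DecidableEq A] [DecidableEq B]
    {M : Matrix A A ℂ} {N : Matrix B B ℂ} (hM : M.PosSemidef) (hN : N.PosSemidef) :
    psdSqrt (M ⊗ₖ N) = psdSqrt M ⊗ₖ psdSqrt N := by
  have hMN : (M ⊗ₖ N).PosSemidef := kron_posSemidef hM hN
  rw [psdSqrt_eq_cfcSqrt hMN]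
  refine CFC.sqrt_unique ?_
    (kron_posSemidef (psdSqrt_posSemidef hM) (psdSqrt_posSemidef hN)).nonneg
  rw [← Matrix.mul_kronecker_mul, psdSqrt_mul_self hM, psdSqrt_mul_self hN]

section Traces
variable {N : Type*} [Fintype N] [DecidableEq N]

lemma trace_PXPX {P X : Matrix N N ℂ} (hP : Pᴴ = P) (hP2 : P * P = P) (hX : Xᴴ = X) :
    Matrix.trace (P * X * P * X) = Matrix.trace ((P * X * P)ᴴ * (P * X * P)) := by
  have hH : (P * X * P)ᴴ = P * X * P := by
    rw [Matrix.conjTranspose_mul, Matrix.conjTranspose_mul, hP, hX, Matrix.mul_assoc]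
  rw [hH]
  have h1 : (P * X * P) * (P * X * P) = (P * X * P * X) * P := by
    calc (P * X * P) * (P * X * P) = P * X * (P * P) * X * P := by noncomm_ring
      _ = (P * X * P * X) * P := by rw [hP2]
  have h2 : P * (P * X * P * X) = (P * P) * X * P * X := by noncomm_ring
  rw [h1, Matrix.trace_mul_comm (P * X * P * X) P, h2, hP2]

lemma trace_PXPX_im {P X : Matrix N N ℂ} (hP : Pᴴ = P) (hP2 : P * P = P) (hX : Xᴴ = X) :
    (Matrix.trace (P * X * P * X)).im = 0 := by
  rw [trace_PXPX hP hP2 hX]; exact trace_conjTranspose_mul_self_im _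

lemma trace_PXPX_re_nonneg {P X : Matrix N N ℂ} (hP : Pᴴ = P) (hP2 : P * P = P) (hX : Xᴴ = X) :
    0 ≤ (Matrix.trace (P * X * P * X)).re := by
  rw [trace_PXPX hP hP2 hX]; exact trace_conjTranspose_mul_self_re_nonneg _

end Traces

section Amp
variable {m n u v : ℕ}

lemma ampMid_kron (P : Matrix (Fin n) (Fin n) ℂ) (Q : Matrix (Fin u) (Fin u) ℂ) :
    ampMid m v (P ⊗ₖ Q) = ((1 : Matrix (Fin m) (Fin m) ℂ) ⊗ₖ P) ⊗ₖ
      (Q ⊗ₖ (1 : Matrix (Fin v) (Fin v) ℂ)) := by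
  ext p q
  simp only [ampMid, Matrix.of_apply, Matrix.kroneckerMap_apply, Matrix.one_apply]
  ring

lemma term_eval (b : Fin n → ℂ) (g : Fin u → ℂ)
    (XAB : Matrix (Fin m × Fin n) (Fin m × Fin n) ℂ)
    (XCD : Matrix (Fin u × Fin v) (Fin u × Fin v) ℂ) :
    Matrix.trace (ampMid m v (outer (tens b g)) * (XAB ⊗ₖ XCD) *
        ampMid m v (outer (tens b g)) * (XAB ⊗ₖ XCD)) =
      Matrix.trace (((1 : Matrix (Fin m) (Fin m) ℂ) ⊗ₖ outer b) * XAB *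
          ((1 : Matrix (Fin m) (Fin m) ℂ) ⊗ₖ outer b) * XAB) *
        Matrix.trace (((outer g) ⊗ₖ (1 : Matrix (Fin v) (Fin v) ℂ)) * XCD *
          ((outer g) ⊗ₖ (1 : Matrix (Fin v) (Fin v) ℂ)) * XCD) := by
  rw [outer_tens, ampMid_kron, ← Matrix.mul_kronecker_mul, ← Matrix.mul_kronecker_mul,
    ← Matrix.mul_kronecker_mul, Matrix.trace_kronecker]

/-- The Hilbert–Schmidt norm identity for pinchings. -/
lemma hs_pinch (w : (Fin n × Fin u) → (Fin n × Fin u) → ℂ)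
    (X : Matrix ((Fin m × Fin n) × Fin u × Fin v) ((Fin m × Fin n) × Fin u × Fin v) ℂ)
    (hX : Xᴴ = X)
    (hA : ∀ h, (ampMid m v (projOf w h))ᴴ = ampMid m v (projOf w h))
    (hAA : ∀ h h', ampMid m v (projOf w h) * ampMid m v (projOf w h') =
      if h = h' then ampMid m v (projOf w h) else 0) :
    hsNormSq (X - pinchBC w X) =
      (Matrix.trace (X * X)).re -
        (∑ h, Matrix.trace (ampMid m v (projOf w h) * X * ampMid m v (projOf w h) * X)).re := by
  classical
  set A : (Fin n × Fin u) → _ := fun h => ampMid m v (projOf w h) with hAdef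
  set Y : Matrix _ _ ℂ := pinchBC w X with hY
  have hYsum : Y = ∑ h, A h * X * A h := rfl
  have hYH : Yᴴ = Y := by
    rw [hYsum, Matrix.conjTranspose_sum]
    refine Finset.sum_congr rfl fun h _ => ?_
    rw [Matrix.conjTranspose_mul, Matrix.conjTranspose_mul, hA, hX, Matrix.mul_assoc]
  have htXY : Matrix.trace (Xᴴ * Y) = ∑ h, Matrix.trace (A h * X * A h * X) := by
    rw [hX, hYsum, Finset.mul_sum, Matrix.trace_sum]
    refine Finset.sum_congr rfl fun h _ => ?_
    rw [Matrix.trace_mul_comm]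
  have htYX : Matrix.trace (Yᴴ * X) = ∑ h, Matrix.trace (A h * X * A h * X) := by
    rw [hYH, hYsum, Finset.sum_mul, Matrix.trace_sum]
  have htYY : Matrix.trace (Yᴴ * Y) = ∑ h, Matrix.trace (A h * X * A h * X) := by
    rw [hYH, hYsum, Finset.sum_mul, Matrix.trace_sum]
    refine Finset.sum_congr rfl fun h _ => ?_
    rw [Finset.mul_sum, Matrix.trace_sum]
    rw [Finset.sum_eq_single h]
    · have : A h * X * A h * (A h * X * A h) = A h * X * (A h * A h) * X * A h := by noncomm_ring
      rw [this, hAA h h, if_pos rfl]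
      have : A h * X * (A h) * X * A h = (A h * X * A h * X) * A h := by noncomm_ring
      rw [this, Matrix.trace_mul_comm]
      have : A h * (A h * X * A h * X) = (A h * A h) * X * A h * X := by noncomm_ring
      rw [this, hAA h h, if_pos rfl]
    · intro h' _ hne
      have : A h * X * A h * (A h' * X * A h') = A h * X * (A h * A h') * X * A h' := by noncomm_ring
      rw [this, hAA h h', if_neg (Ne.symm hne)]
      simp
    · intro habs; exact absurd (Finset.mem_univ h) habs
  have expand : (X - Y)ᴴ * (X - Y) = Xᴴ * X - Xᴴ * Y - Yᴴ * X + Yᴴ * Y := by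
    rw [Matrix.conjTranspose_sub]; noncomm_ring
  rw [hsNormSq, expand]
  rw [Matrix.trace_add, Matrix.trace_sub, Matrix.trace_sub, htXY, htYX, htYY, hX]
  simp only [Complex.add_re, Complex.sub_re]
  ring
end Amp

section Struct
variable {N : Type*} [Fintype N] [DecidableEq N]

lemma outer_mulVec (x z : N → ℂ) : outer x *ᵥ z = cInner x z • x := by
  ext i
  simp only [outer, Matrix.mulVec, dotProduct, Matrix.vecMulVec_apply, cInner,
    Pi.smul_apply, smul_eq_mul, Finset.sum_mul, Pi.star_apply]
  exact Finset.sum_congr rfl fun j _ => by ring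

lemma sum_mulVec' {ι : Type*} (s : Finset ι) (f : ι → Matrix N N ℂ) (x : N → ℂ) :
    (∑ i ∈ s, f i) *ᵥ x = ∑ i ∈ s, f i *ᵥ x := by
  ext j
  simp only [Matrix.mulVec, dotProduct, Matrix.sum_apply, Finset.sum_apply,
    Finset.sum_mul]
  rw [Finset.sum_comm]

lemma cInner_smul_right (x y : N → ℂ) (c : ℂ) : cInner x (c • y) = c * cInner x y := by
  simp only [cInner, Pi.smul_apply, smul_eq_mul, Finset.mul_sum]
  exact Finset.sum_congr rfl fun i _ => by ring

lemma cInner_sum_right {ι : Type*} (s : Finset ι) (x : N → ℂ) (f : ι → N → ℂ) :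
    cInner x (∑ i ∈ s, f i) = ∑ i ∈ s, cInner x (f i) := by
  simp only [cInner, Finset.sum_apply]
  rw [Finset.sum_comm]
  exact Finset.sum_congr rfl fun i _ => by rw [Finset.mul_sum]

lemma cInner_herm {M : Matrix N N ℂ} (hM : Mᴴ = M) (x y : N → ℂ) :
    cInner x (M *ᵥ y) = cInner (M *ᵥ x) y := by
  have hM' : ∀ i j, star (M j i) = M i j := by
    intro i j; rw [← Matrix.conjTranspose_apply, hM]
  simp only [cInner, Matrix.mulVec, dotProduct, Pi.star_apply, star_sum, star_mul',
    Finset.sum_mul, Finset.mul_sum]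
  rw [Finset.sum_comm]
  refine Finset.sum_congr rfl fun j _ => Finset.sum_congr rfl fun i _ => ?_
  rw [← hM' i j]
  ring

/-- every eigenvector relation: a VNM fixing σ consists of eigenvectors of σ. -/
lemma fix_eigen {w : N → N → ℂ} (hw : IsVNM w) {σ : Matrix N N ℂ}
    (hfix : FixesVNM w σ) (h : N) :
    σ *ᵥ w h = cInner (w h) (σ *ᵥ w h) • w h := by
  have := congrArg (fun M => M *ᵥ w h) hfix
  rw [sum_mulVec'] at this
  have heach : ∀ h', (projOf w h' * σ * projOf w h') *ᵥ w h
      = (if h' = h then (1:ℂ) else 0) • (projOf w h' *ᵥ (σ *ᵥ w h)) := by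
    intro h'
    simp only [projOf]
    rw [← Matrix.mulVec_mulVec, ← Matrix.mulVec_mulVec, outer_mulVec (w h') (w h), hw h' h,
      Matrix.mulVec_smul, Matrix.mulVec_smul]
    by_cases hcase : h' = h
    · subst hcase; rfl
    · simp [hcase]
  rw [Finset.sum_congr rfl (fun h' _ => heach h')] at this
  rw [Finset.sum_eq_single h] at this
  · rw [if_pos rfl, one_smul, projOf, outer_mulVec] at this
    exact this.symm
  · intro h' _ hne; rw [if_neg hne, zero_smul]
  · intro habs; exact absurd (Finset.mem_univ h) habs

lemma basis_expand {b : N → N → ℂ} (hb : IsVNM b) (x : N → ℂ) :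
    x = ∑ h, cInner (b h) x • b h := by
  have h1 : x = (∑ h, projOf b h) *ᵥ x := by rw [hb.sum_proj, Matrix.one_mulVec]
  rw [sum_mulVec'] at h1
  conv_lhs => rw [h1]
  exact Finset.sum_congr rfl fun h _ => by rw [projOf, outer_mulVec]

lemma eigen_decomp {b : N → N → ℂ} (hb : IsVNM b) {M : Matrix N N ℂ} {lam : N → ℝ}
    (heig : ∀ e, M *ᵥ b e = (lam e : ℂ) • b e) :
    M = ∑ e, (lam e : ℂ) • projOf b e := by
  have : M = M * ∑ e, projOf b e := by rw [hb.sum_proj, mul_one]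
  rw [Finset.mul_sum] at this
  rw [this]
  refine Finset.sum_congr rfl fun e _ => ?_
  simp only [projOf]
  rw [mul_outer_eq, heig]
  ext i j
  simp only [Matrix.vecMulVec_apply, projOf, outer, Matrix.smul_apply, Pi.smul_apply,
    smul_eq_mul]
  ring

lemma eigen_herm {b : N → N → ℂ} (hb : IsVNM b) {M : Matrix N N ℂ} {lam : N → ℝ}
    (heig : ∀ e, M *ᵥ b e = (lam e : ℂ) • b e) : Mᴴ = M := by
  rw [eigen_decomp hb heig]
  rw [Matrix.conjTranspose_sum]
  refine Finset.sum_congr rfl fun e _ => ?_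
  rw [Matrix.conjTranspose_smul, projOf, outer_conjTranspose]
  congr 1
  simp

lemma eigen_fixes {b : N → N → ℂ} (hb : IsVNM b) {M : Matrix N N ℂ} {lam : N → ℝ}
    (heig : ∀ e, M *ᵥ b e = (lam e : ℂ) • b e) : FixesVNM b M := by
  unfold FixesVNM
  have hterm : ∀ e, projOf b e * M * projOf b e = (lam e : ℂ) • projOf b e := by
    intro e
    have h1 : M * projOf b e = (lam e : ℂ) • projOf b e := by
      simp only [projOf]
      rw [mul_outer_eq, heig]
      ext i j
      simp only [Matrix.vecMulVec_apply, outer, Matrix.smul_apply, Pi.smul_apply, smul_eq_mul]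
      ring
    calc projOf b e * M * projOf b e = projOf b e * (M * projOf b e) := by
          rw [Matrix.mul_assoc]
      _ = (lam e : ℂ) • (projOf b e * projOf b e) := by rw [h1, Matrix.mul_smul]
      _ = (lam e : ℂ) • projOf b e := by
          rw [projOf, outer_mul_self _ (by simpa using hb e e)]
  rw [Finset.sum_congr rfl (fun e _ => hterm e)]
  exact (eigen_decomp hb heig).symm

end Struct

section More
variable {N : Type*} [Fintype N] [DecidableEq N]

lemma cInner_smul_left (x y : N → ℂ) (c : ℂ) : cInner (c • x) y = star c * cInner x y := by
  simp only [cInner, Pi.smul_apply, smul_eq_mul, Finset.mul_sum, star_mul']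
  exact Finset.sum_congr rfl fun i _ => by ring

lemma mulVec_sum' {ι : Type*} (s : Finset ι) (M : Matrix N N ℂ) (f : ι → N → ℂ) :
    M *ᵥ (∑ i ∈ s, f i) = ∑ i ∈ s, M *ᵥ f i := by
  ext j
  simp only [Matrix.mulVec, dotProduct, Finset.sum_apply, Finset.mul_sum]
  rw [Finset.sum_comm]

end More

section AmpMore
variable {m n u v : ℕ}

lemma ite_delta_symm {α : Type*} [DecidableEq α] (a b : α) :
    (if a = b then (1:ℂ) else 0) = (if b = a then (1:ℂ) else 0) := by
  rcases eq_or_ne a b with h | h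
  · simp [h]
  · simp [h, h.symm]

lemma ampMid_conjT (P : Matrix (Fin n × Fin u) (Fin n × Fin u) ℂ) :
    (ampMid m v P)ᴴ = ampMid m v Pᴴ := by
  ext p q
  simp only [Matrix.conjTranspose_apply, ampMid, Matrix.of_apply, star_mul',
    apply_ite (star : ℂ → ℂ), star_one, star_zero]
  try rw [ite_delta_symm q.1.1 p.1.1, ite_delta_symm q.2.2 p.2.2]
  try ring

lemma ampMid_zero : ampMid m v (0 : Matrix (Fin n × Fin u) (Fin n × Fin u) ℂ) = 0 := by
  ext p q
  simp [ampMid]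

lemma ampA_mul (b b' : Fin n → ℂ) (g g' : Fin u → ℂ) :
    (ampMid m v (outer (tens b g)) : Matrix ((Fin m × Fin n) × Fin u × Fin v) _ ℂ) *
      ampMid m v (outer (tens b' g')) =
    ampMid m v ((outer b * outer b') ⊗ₖ (outer g * outer g')) := by
  rw [outer_tens, outer_tens, ampMid_kron, ampMid_kron, ampMid_kron,
    ← Matrix.mul_kronecker_mul, ← Matrix.mul_kronecker_mul, ← Matrix.mul_kronecker_mul,
    one_mul, mul_one]

end AmpMore

section StructThm
variable {n u : ℕ}

lemma tens_smul (a b : ℂ) (x : Fin n → ℂ) (y : Fin u → ℂ) :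
    tens (a • x) (b • y) = (a * b) • tens x y := by
  ext p
  simp only [tens, Pi.smul_apply, smul_eq_mul]
  ring

lemma tens_vnm {β : Fin n → Fin n → ℂ} (hβ : IsVNM β) {γ : Fin u → Fin u → ℂ}
    (hγ : IsVNM γ) : IsVNM (fun p : Fin n × Fin u => tens (β p.1) (γ p.2)) := by
  intro a b
  rw [cInner_tens, hβ a.1 b.1, hγ a.2 b.2]
  by_cases h1 : a.1 = b.1 <;> by_cases h2 : a.2 = b.2 <;>
    simp [h1, h2, Prod.ext_iff]

lemma tens_structure {lam : Fin n → ℝ} {mu : Fin u → ℝ}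
    {β : Fin n → Fin n → ℂ} (hβ : IsVNM β)
    {γ : Fin u → Fin u → ℂ} (hγ : IsVNM γ)
    {ρB : Matrix (Fin n) (Fin n) ℂ} (hβeig : ∀ e, ρB *ᵥ β e = (lam e : ℂ) • β e)
    {ρC : Matrix (Fin u) (Fin u) ℂ} (hγeig : ∀ f, ρC *ᵥ γ f = (mu f : ℂ) • γ f)
    (hdet : ∀ e f e' f', lam e * mu f = lam e' * mu f' → e = e')
    {w : (Fin n × Fin u) → (Fin n × Fin u) → ℂ} (hw : IsVNM w)
    (hfix : FixesVNM w (ρB ⊗ₖ ρC)) (h : Fin n × Fin u) :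
    ∃ (e : Fin n) (g : Fin u → ℂ) (ν : ℝ),
      w h = tens (β e) g ∧ (lam e ≠ 0 → ρC *ᵥ g = (ν : ℂ) • g) := by
  classical
  set σ : Matrix (Fin n × Fin u) (Fin n × Fin u) ℂ := ρB ⊗ₖ ρC with hσdef
  have hσH : σᴴ = σ := by
    rw [hσdef, kron_conjTranspose, eigen_herm hβ hβeig, eigen_herm hγ hγeig]
  set bb : (Fin n × Fin u) → (Fin n × Fin u) → ℂ := fun p => tens (β p.1) (γ p.2) with hbbdef
  have hbb : IsVNM bb := tens_vnm hβ hγ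
  have hbbeig : ∀ p : Fin n × Fin u, σ *ᵥ bb p = ((lam p.1 * mu p.2 : ℝ) : ℂ) • bb p := by
    intro p
    rw [hσdef, hbbdef, kron_mulVec_tens, hβeig, hγeig, tens_smul]
    push_cast
    ring_nf
  set c : ℂ := cInner (w h) (σ *ᵥ w h) with hcdef
  have heigw : σ *ᵥ w h = c • w h := fix_eigen hw hfix h
  set coef : (Fin n × Fin u) → ℂ := fun p => cInner (bb p) (w h) with hcoefdef
  have hc0 : ∀ p : Fin n × Fin u, ((lam p.1 * mu p.2 : ℝ) : ℂ) * coef p = c * coef p := by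
    intro p
    have way1 : cInner (bb p) (σ *ᵥ w h) = c * coef p := by
      rw [heigw, cInner_smul_right]
    have way2 : cInner (bb p) (σ *ᵥ w h) = ((lam p.1 * mu p.2 : ℝ) : ℂ) * coef p := by
      rw [cInner_herm hσH, hbbeig, cInner_smul_left]
      simp [Complex.conj_ofReal, hcoefdef]
    rw [← way1, way2]
  have hp0 : ∃ p : Fin n × Fin u, coef p ≠ 0 := by
    by_contra hall
    push_neg at hall
    have hwh0 : w h = 0 := by
      rw [basis_expand hbb (w h)]
      refine Finset.sum_eq_zero fun p _ => ?_
      have hz : cInner (bb p) (w h) = 0 := hall p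
      rw [hz, zero_smul]
    have h1 : cInner (w h) (w h) = 1 := by simpa using hw h h
    rw [hwh0] at h1
    simp [cInner] at h1
  obtain ⟨p0, hp0ne⟩ := hp0
  have hcval : c = ((lam p0.1 * mu p0.2 : ℝ) : ℂ) := by
    rcases mul_eq_mul_right_iff.mp (hc0 p0) with h1 | h1
    · exact h1.symm
    · exact absurd h1 hp0ne
  refine ⟨p0.1, fun k => ∑ f, coef (p0.1, f) * γ f k, mu p0.2, ?_, ?_⟩
  · -- w h = tens (β p0.1) g
    have hexp := basis_expand hbb (w h)
    funext p
    have hcoefzero : ∀ e f, e ≠ p0.1 → coef (e, f) = 0 := by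
      intro e f hne
      by_contra hne2
      have := hc0 (e, f)
      rw [hcval] at this
      rcases mul_eq_mul_right_iff.mp this with h1 | h1
      · exact hne (hdet e f p0.1 p0.2 (by exact_mod_cast h1))
      · exact hne2 h1
    calc w h p = (∑ q : Fin n × Fin u, coef q • bb q) p := by rw [← hexp]
      _ = ∑ e, ∑ f, coef (e, f) * (β e p.1 * γ f p.2) := by
          simp only [Finset.sum_apply, Pi.smul_apply, smul_eq_mul, hbbdef, tens,
            ← Finset.univ_product_univ, Finset.sum_product]
      _ = ∑ f, coef (p0.1, f) * (β p0.1 p.1 * γ f p.2) := by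
          rw [Finset.sum_eq_single p0.1]
          · intro e _ hne
            exact Finset.sum_eq_zero fun f _ => by rw [hcoefzero e f hne, zero_mul]
          · intro habs; exact absurd (Finset.mem_univ _) habs
      _ = tens (β p0.1) (fun k => ∑ f, coef (p0.1, f) * γ f k) p := by
          simp only [tens, Finset.mul_sum]
          exact Finset.sum_congr rfl fun f _ => by ring
  · -- eigenvector property
    intro hlam
    have hsame : ∀ f, coef (p0.1, f) ≠ 0 → mu f = mu p0.2 := by
      intro f hne
      have := hc0 (p0.1, f)
      rw [hcval] at this
      rcases mul_eq_mul_right_iff.mp this with h1 | h1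
      · exact mul_left_cancel₀ hlam (by exact_mod_cast h1)
      · exact absurd h1 hne
    have : (fun k => ∑ f, coef (p0.1, f) * γ f k) = ∑ f, coef (p0.1, f) • γ f := by
      funext k; simp [Finset.sum_apply]
    rw [this, mulVec_sum']
    have : ∀ f, ρC *ᵥ (coef (p0.1, f) • γ f) = (mu p0.2 : ℂ) • (coef (p0.1, f) • γ f) := by
      intro f
      rw [Matrix.mulVec_smul, hγeig]
      by_cases hne : coef (p0.1, f) = 0
      · rw [hne]; simp
      · rw [hsame f hne]
        rw [smul_comm]
    rw [Finset.sum_congr rfl fun f _ => this f, ← Finset.smul_sum]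

lemma complex_eq_re {z : ℂ} (h : z.im = 0) : z = ((z.re : ℝ) : ℂ) :=
  Complex.ext (by simp) (by simp [h])

section Chunk6
variable {m n u v : ℕ}

lemma oneKronProj_herm {β : Fin n → Fin n → ℂ} (e : Fin n) :
    ((1 : Matrix (Fin m) (Fin m) ℂ) ⊗ₖ projOf β e)ᴴ = 1 ⊗ₖ projOf β e := by
  rw [kron_conjTranspose, Matrix.conjTranspose_one, projOf, outer_conjTranspose]

lemma oneKronProj_idem {β : Fin n → Fin n → ℂ} (hβ : IsVNM β) (e : Fin n) :
    ((1 : Matrix (Fin m) (Fin m) ℂ) ⊗ₖ projOf β e) * (1 ⊗ₖ projOf β e) = 1 ⊗ₖ projOf β e := by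
  rw [← Matrix.mul_kronecker_mul, one_mul, projOf, outer_mul_self _ (by simpa using hβ e e)]

lemma projKronOne_herm (g : Fin u → ℂ) :
    ((outer g) ⊗ₖ (1 : Matrix (Fin v) (Fin v) ℂ))ᴴ = outer g ⊗ₖ 1 := by
  rw [kron_conjTranspose, Matrix.conjTranspose_one, outer_conjTranspose]

lemma projKronOne_idem {g : Fin u → ℂ} (hg : cInner g g = 1) :
    ((outer g) ⊗ₖ (1 : Matrix (Fin v) (Fin v) ℂ)) * (outer g ⊗ₖ 1) = outer g ⊗ₖ 1 := by
  rw [← Matrix.mul_kronecker_mul, one_mul, outer_mul_self _ hg]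

lemma trace_pinchB (β : Fin n → Fin n → ℂ) (X : Matrix (Fin m × Fin n) (Fin m × Fin n) ℂ) :
    Matrix.trace (X * pinchB β X) =
      ∑ e, Matrix.trace (((1 : Matrix (Fin m) (Fin m) ℂ) ⊗ₖ projOf β e) * X *
        ((1 : Matrix (Fin m) (Fin m) ℂ) ⊗ₖ projOf β e) * X) := by
  rw [pinchB, Finset.mul_sum, Matrix.trace_sum]
  exact Finset.sum_congr rfl fun e _ => Matrix.trace_mul_comm _ _

lemma trace_pinchC (Q : Fin u → Fin u → ℂ) (X : Matrix (Fin u × Fin v) (Fin u × Fin v) ℂ) :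
    Matrix.trace (X * pinchC Q X) =
      ∑ f, Matrix.trace (((projOf Q f) ⊗ₖ (1 : Matrix (Fin v) (Fin v) ℂ)) * X *
        ((projOf Q f) ⊗ₖ (1 : Matrix (Fin v) (Fin v) ℂ)) * X) := by
  rw [pinchC, Finset.mul_sum, Matrix.trace_sum]
  exact Finset.sum_congr rfl fun f _ => Matrix.trace_mul_comm _ _

lemma trace_contract_B (M : Matrix (Fin m × Fin n) (Fin m × Fin n) ℂ)
    (P : Matrix (Fin n) (Fin n) ℂ) :
    Matrix.trace (M * ((1 : Matrix (Fin m) (Fin m) ℂ) ⊗ₖ P)) = Matrix.trace (redB M * P) := by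
  have key : ∀ (i : Fin m) (j : Fin n), (M * ((1 : Matrix (Fin m) (Fin m) ℂ) ⊗ₖ P)) (i,j) (i,j)
      = ∑ j', M (i,j) (i,j') * P j' j := by
    intro i j
    rw [Matrix.mul_apply, ← Finset.univ_product_univ, Finset.sum_product]
    rw [Finset.sum_eq_single i]
    · refine Finset.sum_congr rfl fun j' _ => ?_
      simp [Matrix.kroneckerMap_apply, Matrix.one_apply]
    · intro i' _ hne
      refine Finset.sum_eq_zero fun j' _ => ?_
      simp [Matrix.kroneckerMap_apply, Matrix.one_apply, hne]
    · intro habs; exact absurd (Finset.mem_univ i) habs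
  calc Matrix.trace (M * ((1 : Matrix (Fin m) (Fin m) ℂ) ⊗ₖ P))
      = ∑ i : Fin m, ∑ j : Fin n, ∑ j', M (i,j) (i,j') * P j' j := by
        simp only [Matrix.trace, Matrix.diag]
        rw [← Finset.univ_product_univ, Finset.sum_product]
        exact Finset.sum_congr rfl fun i _ => Finset.sum_congr rfl fun j _ => key i j
    _ = ∑ j : Fin n, ∑ j', (∑ i : Fin m, M (i,j) (i,j')) * P j' j := by
        rw [Finset.sum_comm]
        refine Finset.sum_congr rfl fun j _ => ?_
        rw [Finset.sum_comm]
        refine Finset.sum_congr rfl fun j' _ => ?_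
        rw [Finset.sum_mul]
    _ = Matrix.trace (redB M * P) := by
        simp only [Matrix.trace, Matrix.diag, Matrix.mul_apply, redB, Matrix.of_apply]

lemma alpha_zero_aux {N : Type*} [Fintype N] [DecidableEq N] {ρ Me : Matrix N N ℂ}
    (hρ : ρ.PosSemidef) (hMeH : Meᴴ = Me) (hMe2 : Me * Me = Me)
    (htr : Matrix.trace (ρ * Me) = 0) :
    Matrix.trace (Me * psdSqrt ρ * Me * psdSqrt ρ) = 0 := by
  set X := psdSqrt ρ with hX
  have hXH : Xᴴ = X := (psdSqrt_posSemidef hρ).1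
  have hXMe : X * Me = 0 := by
    apply trace_conjTranspose_mul_self_eq_zero
    have h1 : (X * Me)ᴴ = Me * X := by rw [Matrix.conjTranspose_mul, hMeH, hXH]
    rw [h1]
    have h2 : Me * X * (X * Me) = Me * (X * X) * Me := by noncomm_ring
    have h3 : X * X = ρ := psdSqrt_mul_self hρ
    rw [h2, h3, Matrix.trace_mul_comm, ← Matrix.mul_assoc, hMe2, Matrix.trace_mul_comm]
    exact htr
  have hMeX : Me * X = 0 := by
    have h1 : (X * Me)ᴴ = Me * X := by rw [Matrix.conjTranspose_mul, hMeH, hXH]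
    rw [← h1, hXMe, Matrix.conjTranspose_zero]
  rw [hMeX]
  simp

end Chunk6

/-- If the eigenvalue products of ρ_B and ρ_C determine the B-index, then
`N_H^b = 1 − tr(√ρ_AB Π^B(√ρ_AB)) · inf_Q tr(√ρ_CD Π^C(√ρ_CD))`. -/

theorem stmt14 {m n u v : ℕ}
    (ρAB : Matrix (Fin m × Fin n) (Fin m × Fin n) ℂ)
    (ρCD : Matrix (Fin u × Fin v) (Fin u × Fin v) ℂ)
    (hAB : IsDensity ρAB) (hCD : IsDensity ρCD)
    (lam : Fin n → ℝ) (mu : Fin u → ℝ)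
    (β : Fin n → Fin n → ℂ) (hβ : IsVNM β)
    (hβeig : ∀ e, redB ρAB *ᵥ β e = (lam e : ℂ) • β e)
    (γ : Fin u → Fin u → ℂ) (hγ : IsVNM γ)
    (hγeig : ∀ f, redC ρCD *ᵥ γ f = (mu f : ℂ) • γ f)
    (hdet : ∀ e f e' f', lam e * mu f = lam e' * mu f' → e = e') :
    NHb ρAB ρCD =
      1 - (Matrix.trace (psdSqrt ρAB * pinchB β (psdSqrt ρAB))).re *
        sInf { r : ℝ | ∃ Q : Fin u → Fin u → ℂ, IsVNM Q ∧ FixesVNM Q (redC ρCD) ∧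
          r = (Matrix.trace (psdSqrt ρCD * pinchC Q (psdSqrt ρCD))).re } := by
  classical
  obtain ⟨hABpsd, hABtr⟩ := hAB
  obtain ⟨hCDpsd, hCDtr⟩ := hCD
  set ρB := redB ρAB with hρB
  set ρC := redC ρCD with hρC
  set XAB := psdSqrt ρAB with hXABdef
  set XCD := psdSqrt ρCD with hXCDdef
  have hXABh : XABᴴ = XAB := (psdSqrt_posSemidef hABpsd).1
  have hXCDh : XCDᴴ = XCD := (psdSqrt_posSemidef hCDpsd).1
  have hsqrtkron : psdSqrt (ρAB ⊗ₖ ρCD) = XAB ⊗ₖ XCD := psdSqrt_kron hABpsd hCDpsd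
  have hXh : (XAB ⊗ₖ XCD)ᴴ = XAB ⊗ₖ XCD := by rw [kron_conjTranspose, hXABh, hXCDh]
  have htrX : Matrix.trace ((XAB ⊗ₖ XCD) * (XAB ⊗ₖ XCD)) = 1 := by
    rw [← Matrix.mul_kronecker_mul, hXABdef, hXCDdef, psdSqrt_mul_self hABpsd,
      psdSqrt_mul_self hCDpsd, Matrix.trace_kronecker, hABtr, hCDtr, one_mul]
  -- real quantities
  set Pe : Fin n → Matrix (Fin m × Fin n) (Fin m × Fin n) ℂ :=
    fun e => (1 : Matrix (Fin m) (Fin m) ℂ) ⊗ₖ projOf β e with hPedef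
  set Gv : (Fin u → ℂ) → Matrix (Fin u × Fin v) (Fin u × Fin v) ℂ :=
    fun g => outer g ⊗ₖ (1 : Matrix (Fin v) (Fin v) ℂ) with hGdef
  set αr : Fin n → ℝ := fun e => (Matrix.trace (Pe e * XAB * Pe e * XAB)).re with hαdef
  set κr : (Fin u → ℂ) → ℝ := fun g => (Matrix.trace (Gv g * XCD * Gv g * XCD)).re with hκdef
  have hαC : ∀ e, Matrix.trace (Pe e * XAB * Pe e * XAB) = ((αr e : ℝ) : ℂ) :=
    fun e => complex_eq_re (trace_PXPX_im (oneKronProj_herm e) (oneKronProj_idem hβ e) hXABh)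
  have hαnn : ∀ e, 0 ≤ αr e :=
    fun e => trace_PXPX_re_nonneg (oneKronProj_herm e) (oneKronProj_idem hβ e) hXABh
  have hκC : ∀ g : Fin u → ℂ, cInner g g = 1 →
      Matrix.trace (Gv g * XCD * Gv g * XCD) = ((κr g : ℝ) : ℂ) :=
    fun g hg => complex_eq_re (trace_PXPX_im (projKronOne_herm g) (projKronOne_idem hg) hXCDh)
  have hκnn : ∀ g : Fin u → ℂ, cInner g g = 1 → 0 ≤ κr g :=
    fun g hg => trace_PXPX_re_nonneg (projKronOne_herm g) (projKronOne_idem hg) hXCDh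
  have hβunit : ∀ e, cInner (β e) (β e) = 1 := fun e => by simpa using hβ e e
  -- a
  have ha : (Matrix.trace (XAB * pinchB β XAB)).re = ∑ e, αr e := by
    rw [trace_pinchB]
    simp [Complex.re_sum, hαdef, hPedef]
  set a : ℝ := ∑ e, αr e with hadef
  have hannn : 0 ≤ a := Finset.sum_nonneg fun e _ => hαnn e
  -- alpha zero
  have hαzero : ∀ e, lam e = 0 → αr e = 0 := by
    intro e hl
    have htr0 : Matrix.trace (ρAB * Pe e) = 0 := by
      have h1 : Matrix.trace (ρAB * Pe e) = Matrix.trace (ρB * projOf β e) := by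
        rw [hPedef]; exact trace_contract_B ρAB (projOf β e)
      rw [h1, projOf, trace_mul_outer, hβeig, cInner_smul_right, hβunit e]
      simp [hl]
    have h2 := alpha_zero_aux hABpsd (oneKronProj_herm (m := m) e) (oneKronProj_idem hβ e) htr0
    have h3 : Matrix.trace (Pe e * XAB * Pe e * XAB) = 0 := h2
    show (Matrix.trace (Pe e * XAB * Pe e * XAB)).re = 0
    rw [h3]
    rfl
  -- SC facts
  have hSCval : ∀ Q : Fin u → Fin u → ℂ,
      (Matrix.trace (XCD * pinchC Q XCD)).re = ∑ f, κr (Q f) := by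
    intro Q
    rw [trace_pinchC]
    simp [Complex.re_sum, hκdef, hGdef, projOf]
  -- value identity for structured measurements
  have hval : ∀ (w : (Fin n × Fin u) → (Fin n × Fin u) → ℂ)
      (E : Fin n × Fin u → Fin n) (g : Fin n × Fin u → Fin u → ℂ),
      IsVNM w → (∀ h, w h = tens (β (E h)) (g h)) →
      hsNormSq (XAB ⊗ₖ XCD - pinchBC w (XAB ⊗ₖ XCD)) = 1 - ∑ h, αr (E h) * κr (g h) := by
    intro w E g hwv hwh
    have hgunit : ∀ h, cInner (g h) (g h) = 1 := by
      intro h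
      have h1 : cInner (w h) (w h) = 1 := by simpa using hwv h h
      rw [hwh h, cInner_tens, hβunit] at h1
      simpa using h1
    have hA : ∀ h, (ampMid m v (projOf w h))ᴴ = ampMid m v (projOf w h) := by
      intro h
      rw [ampMid_conjT, show (projOf w h)ᴴ = projOf w h from outer_conjTranspose _]
    have hAA : ∀ h h', ampMid m v (projOf w h) * ampMid m v (projOf w h') =
        if h = h' then ampMid m v (projOf w h) else 0 := by
      intro h h'
      have e1 : projOf w h = outer (tens (β (E h)) (g h)) := by rw [projOf, hwh h]
      have e2 : projOf w h' = outer (tens (β (E h')) (g h')) := by rw [projOf, hwh h']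
      rw [e1, e2, ampA_mul]
      by_cases hc : h = h'
      · subst hc
        rw [if_pos rfl, outer_mul_self _ (hβunit (E h)), outer_mul_self _ (hgunit h),
          ← outer_tens]
      · rw [if_neg hc]
        have h0 : cInner (w h) (w h') = 0 := by
          have := hwv h h'; rwa [if_neg hc] at this
        rw [hwh h, hwh h', cInner_tens] at h0
        by_cases hE : E h = E h'
        · have hg0 : cInner (g h) (g h') = 0 := by
            rw [hE, hβunit] at h0; simpa using h0
          rw [outer_mul_orth _ _ hg0, Matrix.kronecker_zero, ampMid_zero]
        · have hb0 : cInner (β (E h)) (β (E h')) = 0 := by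
            have := hβ (E h) (E h'); rwa [if_neg hE] at this
          rw [outer_mul_orth _ _ hb0, Matrix.zero_kronecker, ampMid_zero]
    rw [hs_pinch w (XAB ⊗ₖ XCD) hXh hA hAA, htrX]
    have hterm : ∀ h, Matrix.trace (ampMid m v (projOf w h) * (XAB ⊗ₖ XCD) *
        ampMid m v (projOf w h) * (XAB ⊗ₖ XCD)) = ((αr (E h) * κr (g h) : ℝ) : ℂ) := by
      intro h
      have e1 : projOf w h = outer (tens (β (E h)) (g h)) := by rw [projOf, hwh h]
      rw [e1, term_eval]
      have t1 : Matrix.trace (((1 : Matrix (Fin m) (Fin m) ℂ) ⊗ₖ outer (β (E h))) * XAB *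
          ((1 : Matrix (Fin m) (Fin m) ℂ) ⊗ₖ outer (β (E h))) * XAB) = ((αr (E h) : ℝ) : ℂ) :=
        hαC (E h)
      have t2 : Matrix.trace (((outer (g h)) ⊗ₖ (1 : Matrix (Fin v) (Fin v) ℂ)) * XCD *
          ((outer (g h)) ⊗ₖ (1 : Matrix (Fin v) (Fin v) ℂ)) * XCD) = ((κr (g h) : ℝ) : ℂ) :=
        hκC (g h) (hgunit h)
      rw [t1, t2]
      push_cast
      ring
    rw [Finset.sum_congr rfl fun h _ => hterm h]
    rw [show (1 : ℂ).re = 1 from rfl]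
    congr 1
    rw [Complex.re_sum]
    push_cast
    simp
  -- SC set
  set SC : Set ℝ := { r : ℝ | ∃ Q : Fin u → Fin u → ℂ, IsVNM Q ∧ FixesVNM Q ρC ∧
      r = (Matrix.trace (XCD * pinchC Q XCD)).re } with hSCdef
  have hSCne : SC.Nonempty := ⟨_, γ, hγ, eigen_fixes hγ hγeig, rfl⟩
  have hSCnonneg : ∀ r ∈ SC, 0 ≤ r := by
    rintro r ⟨Q, hQv, hQf, rfl⟩
    rw [hSCval Q]
    exact Finset.sum_nonneg fun f _ => hκnn (Q f) (by simpa using hQv f f)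
  have hSCbdd : BddBelow SC := ⟨0, fun r hr => hSCnonneg r hr⟩
  rw [NHb]
  simp only [hsqrtkron]
  set NS : Set ℝ := { r : ℝ | ∃ w : (Fin n × Fin u) → (Fin n × Fin u) → ℂ,
    IsVNM w ∧ FixesVNM w (redB ρAB ⊗ₖ redC ρCD) ∧
    r = hsNormSq (XAB ⊗ₖ XCD - pinchBC w (XAB ⊗ₖ XCD)) } with hNSdef
  -- upper bound for elements of NS
  have hub : ∀ r ∈ NS, r ≤ 1 - a * sInf SC := by
    rintro r ⟨w, hwv, hwf, rfl⟩
    choose E g ν hwh hν using fun h => tens_structure hβ hγ hβeig hγeig hdet hwv hwf h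
    rw [hval w E g hwv hwh]
    have hginner : ∀ h h', E h = E h' → cInner (g h) (g h') =
        if h = h' then (1:ℂ) else 0 := by
      intro h h' hE
      have h1 := hwv h h'
      rw [hwh h, hwh h', cInner_tens, hE, hβunit, one_mul] at h1
      exact h1
    have hgroup : (∑ h, αr (E h) * κr (g h))
        = ∑ e, αr e * ∑ h ∈ Finset.univ.filter (fun h => E h = e), κr (g h) := by
      rw [← Finset.sum_fiberwise_of_maps_to (fun x _ => Finset.mem_univ (E x))
        (fun h => αr (E h) * κr (g h))]
      refine Finset.sum_congr rfl fun e _ => ?_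
      rw [Finset.mul_sum]
      refine Finset.sum_congr rfl fun h hh => ?_
      rw [(Finset.mem_filter.mp hh).2]
    have hcard_le : ∀ e, (Finset.univ.filter (fun h => E h = e)).card ≤ u := by
      intro e
      have hli : LinearIndependent ℂ
          (fun (x : {h // h ∈ Finset.univ.filter (fun h => E h = e)}) => g x.1) := by
        rw [Fintype.linearIndependent_iff]
        intro coef hsum x0
        have hEx : ∀ x : {h // h ∈ Finset.univ.filter (fun h => E h = e)}, E x.1 = e :=
          fun x => (Finset.mem_filter.mp x.2).2
        have h1 : cInner (g x0.1) (∑ x, coef x • g x.1) = coef x0 := by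
          rw [cInner_sum_right]
          rw [Finset.sum_eq_single x0]
          · rw [cInner_smul_right, hginner _ _ (by simp only [hEx]), if_pos rfl, mul_one]
          · intro b _ hne
            rw [cInner_smul_right, hginner x0.1 b.1 (by simp only [hEx]),
              if_neg (fun hh => hne (Subtype.ext hh).symm), mul_zero]
          · intro habs; exact absurd (Finset.mem_univ x0) habs
        rw [hsum] at h1
        rw [← h1]
        simp [cInner]
      have h2 := hli.fintype_card_le_finrank
      rwa [Module.finrank_fin_fun, Fintype.card_coe] at h2
    have hcardsum : (∑ e, (Finset.univ.filter (fun h => E h = e)).card) = n * u := by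
      rw [← Finset.card_eq_sum_card_fiberwise (fun x _ => Finset.mem_univ (E x))]
      simp [Finset.card_univ]
    have hcard : ∀ e, (Finset.univ.filter (fun h => E h = e)).card = u := by
      by_contra hcon
      push_neg at hcon
      obtain ⟨e0, he0⟩ := hcon
      have hlt : (Finset.univ.filter (fun h => E h = e0)).card < u :=
        lt_of_le_of_ne (hcard_le e0) he0
      have hstrict : (∑ e, (Finset.univ.filter (fun h => E h = e)).card) < ∑ _e : Fin n, u :=
        Finset.sum_lt_sum (fun e _ => hcard_le e) ⟨e0, Finset.mem_univ e0, hlt⟩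
      rw [hcardsum] at hstrict
      have hconst : (∑ _e : Fin n, u) = n * u := by
        simp [Finset.sum_const, Finset.card_univ, smul_eq_mul]
      rw [hconst] at hstrict
      exact lt_irrefl _ hstrict
    have hTe : ∀ e, αr e ≠ 0 →
        (∑ h ∈ Finset.univ.filter (fun h => E h = e), κr (g h)) ∈ SC := by
      intro e hαe
      have hlam : lam e ≠ 0 := fun hl => hαe (hαzero e hl)
      have hcards : Fintype.card (Finset.univ.filter (fun h : Fin n × Fin u => E h = e)) = u := by
        rw [Fintype.card_coe]; exact hcard e
      set eqv := Fintype.equivFinOfCardEq hcards with heqv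
      set Q : Fin u → Fin u → ℂ := fun f => g (eqv.symm f).1 with hQ
      have hmemE : ∀ x : (Finset.univ.filter (fun h : Fin n × Fin u => E h = e)), E x.1 = e :=
        fun x => (Finset.mem_filter.mp x.2).2
      have hQv : IsVNM Q := by
        intro a' b'
        have h1 := hginner (eqv.symm a').1 (eqv.symm b').1 (by simp only [hmemE])
        rw [hQ]
        rw [h1]
        by_cases hab : a' = b'
        · subst hab; simp
        · rw [if_neg (fun hh => hab (eqv.symm.injective (Subtype.ext hh))), if_neg hab]
      have hQeig : ∀ f, ρC *ᵥ Q f = ((ν (eqv.symm f).1 : ℝ) : ℂ) • Q f := by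
        intro f
        apply hν
        rw [hmemE]; exact hlam
      refine ⟨Q, hQv, eigen_fixes hQv hQeig, ?_⟩
      rw [hSCval Q]
      calc (∑ h ∈ Finset.univ.filter (fun h => E h = e), κr (g h))
          = ∑ x : (Finset.univ.filter (fun h : Fin n × Fin u => E h = e)), κr (g x.1) :=
            (Finset.sum_coe_sort _ _).symm
        _ = ∑ f, κr (Q f) := (Equiv.sum_comp eqv.symm (fun x => κr (g x.1))).symm
    have hVbound : a * sInf SC ≤ ∑ e, αr e * ∑ h ∈ Finset.univ.filter
        (fun h => E h = e), κr (g h) := by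
      rw [hadef, Finset.sum_mul]
      refine Finset.sum_le_sum fun e _ => ?_
      by_cases hz : αr e = 0
      · rw [hz]; simp
      · exact mul_le_mul_of_nonneg_left (csInf_le hSCbdd (hTe e hz)) (hαnn e)
    rw [hgroup]
    linarith
  -- membership of 1 - a * s
  have hmem : ∀ s ∈ SC, (1 - a * s) ∈ NS := by
    rintro s ⟨Q, hQv, hQf, rfl⟩
    have hQf' : (∑ f, projOf Q f * ρC * projOf Q f) = ρC := hQf
    have hβf' : (∑ e, projOf β e * ρB * projOf β e) = ρB := eigen_fixes hβ hβeig
    refine ⟨fun p => tens (β p.1) (Q p.2), tens_vnm hβ hQv, ?_, ?_⟩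
    · show (∑ p : Fin n × Fin u, projOf (fun p : Fin n × Fin u => tens (β p.1) (Q p.2)) p *
        (redB ρAB ⊗ₖ redC ρCD) * projOf (fun p : Fin n × Fin u => tens (β p.1) (Q p.2)) p)
        = redB ρAB ⊗ₖ redC ρCD
      have hterm : ∀ p : Fin n × Fin u,
          projOf (fun p : Fin n × Fin u => tens (β p.1) (Q p.2)) p *
            (redB ρAB ⊗ₖ redC ρCD) *
            projOf (fun p : Fin n × Fin u => tens (β p.1) (Q p.2)) p
          = (projOf β p.1 * ρB * projOf β p.1) ⊗ₖ (projOf Q p.2 * ρC * projOf Q p.2) := by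
        intro p
        have e1 : projOf (fun p : Fin n × Fin u => tens (β p.1) (Q p.2)) p
            = projOf β p.1 ⊗ₖ projOf Q p.2 := outer_tens (β p.1) (Q p.2)
        rw [e1, ← Matrix.mul_kronecker_mul, ← Matrix.mul_kronecker_mul]
      rw [Finset.sum_congr rfl (fun p _ => hterm p)]
      rw [← Finset.univ_product_univ, Finset.sum_product]
      have hinner : ∀ e : Fin n,
          (∑ f, (projOf β e * ρB * projOf β e) ⊗ₖ (projOf Q f * ρC * projOf Q f))
          = (projOf β e * ρB * projOf β e) ⊗ₖ ρC := by
        intro e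
        rw [← kron_sum, hQf']
      rw [Finset.sum_congr rfl (fun e _ => hinner e), ← sum_kron, hβf']
    · rw [hval (fun p => tens (β p.1) (Q p.2)) (fun p => p.1) (fun p => Q p.2)
        (tens_vnm hβ hQv) (fun p => rfl)]
      congr 1
      rw [hSCval Q, hadef, Finset.sum_mul_sum, ← Finset.univ_product_univ, Finset.sum_product]
  -- conclude
  have hNSne : NS.Nonempty := by
    obtain ⟨s, hs⟩ := hSCne
    exact ⟨1 - a * s, hmem s hs⟩
  have hNSbdd : BddAbove NS := ⟨1 - a * sInf SC, fun r hr => hub r hr⟩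
  have hle : sSup NS ≤ 1 - a * sInf SC := csSup_le hNSne hub
  have hge : 1 - a * sInf SC ≤ sSup NS := by
    rcases eq_or_lt_of_le hannn with haz | hap
    · obtain ⟨s, hs⟩ := hSCne
      have h1 := le_csSup hNSbdd (hmem s hs)
      rw [← haz] at h1 ⊢
      simpa using h1
    · have hstep : ∀ s ∈ SC, (1 - sSup NS) / a ≤ s := by
        intro s hs
        have h1 : 1 - a * s ≤ sSup NS := le_csSup hNSbdd (hmem s hs)
        rw [div_le_iff₀ hap]
        linarith
      have h2 : (1 - sSup NS) / a ≤ sInf SC := le_csInf hSCne hstep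
      rw [div_le_iff₀ hap] at h2
      linarith
  rw [ha]
  exact le_antisymm hle hge
end StructThm
end
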